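/- Let E be separable, {A(λ)}_{λ∈[0,1]} a resolvent-continuous family of generators with ‖S_{A(λ)}(t)‖ ≤ e^{-ωt}, and F : [0,T] × E × [0,1] → E continuous, locally Lipschitz in x uniformly, with uniform linear growth, and with β(F([0,T] × Ω × [0,1])) ≤ kβ(Ω) for all bounded Ω. Let Φ_t(x,λ) := u(t; x, λ) be the mild solution evaluation map. Then for each t ∈ [0,T] and bounded Ω ⊂ E: β(Φ_t(Ω × [0,1])) ≤ e^{(k-ω)t} β(Ω). -/

import Mathlib

open Bornology Set

/-- Hausdorff measure of noncompactness. -/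
noncomputable def hmnc {E : Type*} [NormedAddCommGroup E] (Ω : Set E) : ℝ :=
  sInf {r : ℝ | 0 < r ∧ ∃ S : Finset E, Ω ⊆ ⋃ x ∈ S, Metric.ball x r}

section HmncBasic

variable {E : Type*} [NormedAddCommGroup E]

def covSet (Ω : Set E) : Set ℝ := {r : ℝ | 0 < r ∧ ∃ S : Finset E, Ω ⊆ ⋃ x ∈ S, Metric.ball x r}

lemma hmnc_eq (Ω : Set E) : hmnc Ω = sInf (covSet Ω) := rfl

lemma covSet_bddBelow (Ω : Set E) : BddBelow (covSet Ω) := ⟨0, fun _ hr => hr.1.le⟩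

lemma covSet_mono (Ω : Set E) {r r' : ℝ} (h : r ∈ covSet Ω) (hle : r ≤ r') : r' ∈ covSet Ω := by
  obtain ⟨hr, Sf, hS⟩ := h
  exact ⟨lt_of_lt_of_le hr hle, Sf, hS.trans (Set.iUnion₂_mono fun x _ => Metric.ball_subset_ball hle)⟩

lemma hmnc_nonneg (Ω : Set E) : 0 ≤ hmnc Ω :=
  Real.sInf_nonneg fun _ hr => hr.1.le

lemma hmnc_le_of_cov {Ω : Set E} {r : ℝ} (hr : 0 < r)
    (h : ∃ Sf : Finset E, Ω ⊆ ⋃ x ∈ Sf, Metric.ball x r) : hmnc Ω ≤ r :=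
  csInf_le (covSet_bddBelow Ω) ⟨hr, h⟩

lemma covSet_nonempty {Ω : Set E} (hΩ : IsBounded Ω) : (covSet Ω).Nonempty := by
  obtain ⟨R, hR⟩ := hΩ.subset_closedBall (0 : E)
  refine ⟨|R| + 1, by positivity, {0}, hR.trans ?_⟩
  intro x hx
  simp only [Finset.mem_singleton, Set.iUnion_iUnion_eq_left]
  exact lt_of_le_of_lt (Metric.mem_closedBall.mp hx) (by
    have : R ≤ |R| := le_abs_self R
    linarith)

lemma cov_of_hmnc_lt {Ω : Set E} (hΩ : IsBounded Ω) {r : ℝ} (h : hmnc Ω < r) :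
    r ∈ covSet Ω := by
  obtain ⟨r', hr', hlt⟩ := exists_lt_of_csInf_lt (covSet_nonempty hΩ) h
  exact covSet_mono Ω hr' hlt.le

lemma hmnc_le_of_forall_cov {Ω : Set E} {b : ℝ} (hb : 0 ≤ b)
    (h : ∀ r > b, r ∈ covSet Ω) : hmnc Ω ≤ b := by
  refine le_of_forall_pos_le_add fun ε hε => ?_
  exact hmnc_le_of_cov (by linarith) (h (b + ε) (by linarith)).2

lemma hmnc_le_near_tb {ι : Type*} {D : Set E} (I : Finset ι) (K : ι → Set E)
    (hK : ∀ i ∈ I, TotallyBounded (K i)) {ρ : ℝ} (hρ : 0 ≤ ρ)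
    (hD : ∀ y ∈ D, ∃ i ∈ I, ∃ u ∈ K i, ‖y - u‖ ≤ ρ) : hmnc D ≤ ρ := by
  classical
  refine hmnc_le_of_forall_cov hρ fun r hr => ?_
  have hε : 0 < r - ρ := by linarith
  have hnet : ∀ i : ι, ∃ t : Finset E, i ∈ I → (K i) ⊆ ⋃ y ∈ t, Metric.ball y (r - ρ) := by
    intro i
    by_cases hi : i ∈ I
    · obtain ⟨t, htfin, hts⟩ := Metric.totallyBounded_iff.mp (hK i hi) (r - ρ) hε
      exact ⟨htfin.toFinset, fun _ => by simpa using hts⟩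
    · exact ⟨∅, fun h => absurd h hi⟩
  choose t ht using hnet
  refine ⟨hρ.trans_lt hr, I.biUnion t, fun y hy => ?_⟩
  obtain ⟨i, hi, u, hu, hyu⟩ := hD y hy
  obtain ⟨c, hc, huc⟩ := Set.mem_iUnion₂.mp (ht i hi hu)
  refine Set.mem_iUnion₂.mpr ⟨c, Finset.mem_biUnion.mpr ⟨i, hi, hc⟩, ?_⟩
  have : ‖y - c‖ < r := by
    calc ‖y - c‖ ≤ ‖y - u‖ + ‖u - c‖ := norm_sub_le_norm_sub_add_norm_sub y u c
    _ < ρ + (r - ρ) := by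
        have := Metric.mem_ball.mp huc
        rw [dist_eq_norm] at this
        linarith
    _ = r := by ring
  simpa [Metric.mem_ball, dist_eq_norm] using this

lemma hmnc_le_add {D A B : Set E} (hA : IsBounded A) (hB : IsBounded B)
    (hD : ∀ y ∈ D, ∃ a ∈ A, ∃ b ∈ B, y = a + b) : hmnc D ≤ hmnc A + hmnc B := by
  classical
  refine hmnc_le_of_forall_cov (add_nonneg (hmnc_nonneg A) (hmnc_nonneg B)) fun r hr => ?_
  have hε : 0 < (r - hmnc A - hmnc B) / 2 := by linarith
  set ε := (r - hmnc A - hmnc B) / 2 with hεdef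
  obtain ⟨hrA, SA, hSA⟩ := cov_of_hmnc_lt hA (show hmnc A < hmnc A + ε by linarith)
  obtain ⟨hrB, SB, hSB⟩ := cov_of_hmnc_lt hB (show hmnc B < hmnc B + ε by linarith)
  refine ⟨by linarith [hmnc_nonneg A, hmnc_nonneg B], (SA ×ˢ SB).image (fun p => p.1 + p.2),
    fun y hy => ?_⟩
  obtain ⟨a, ha, b, hb, rfl⟩ := hD y hy
  obtain ⟨a₀, ha₀, haa⟩ := Set.mem_iUnion₂.mp (hSA ha)
  obtain ⟨b₀, hb₀, hbb⟩ := Set.mem_iUnion₂.mp (hSB hb)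
  refine Set.mem_iUnion₂.mpr ⟨a₀ + b₀, Finset.mem_image.mpr ⟨(a₀, b₀),
    Finset.mem_product.mpr ⟨ha₀, hb₀⟩, rfl⟩, ?_⟩
  rw [Metric.mem_ball, dist_eq_norm] at *
  calc ‖a + b - (a₀ + b₀)‖ = ‖(a - a₀) + (b - b₀)‖ := by
        congr 1; abel
  _ ≤ ‖a - a₀‖ + ‖b - b₀‖ := norm_add_le _ _
  _ < (hmnc A + ε) + (hmnc B + ε) := by linarith
  _ = r := by rw [hεdef]; ring

lemma hmnc_le_add_const {D A : Set E} (hA : IsBounded A) {δ : ℝ} (hδ : 0 ≤ δ)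
    (hD : ∀ y ∈ D, ∃ a ∈ A, ‖y - a‖ ≤ δ) : hmnc D ≤ hmnc A + δ := by
  refine hmnc_le_of_forall_cov (add_nonneg (hmnc_nonneg A) hδ) fun r hr => ?_
  have hε : 0 < r - hmnc A - δ := by linarith
  obtain ⟨hrA, SA, hSA⟩ := cov_of_hmnc_lt hA (show hmnc A < hmnc A + (r - hmnc A - δ) by linarith)
  refine ⟨by linarith [hmnc_nonneg A], SA, fun y hy => ?_⟩
  obtain ⟨a, ha, hya⟩ := hD y hy
  obtain ⟨a₀, ha₀, haa⟩ := Set.mem_iUnion₂.mp (hSA ha)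
  refine Set.mem_iUnion₂.mpr ⟨a₀, ha₀, ?_⟩
  rw [Metric.mem_ball, dist_eq_norm] at *
  calc ‖y - a₀‖ ≤ ‖y - a‖ + ‖a - a₀‖ := norm_sub_le_norm_sub_add_norm_sub y a a₀
  _ < δ + (hmnc A + (r - hmnc A - δ)) := by linarith
  _ = r := by ring

end HmncBasic

set_option linter.unusedSectionVars false

section SemigroupAux

open Bornology Set MeasureTheory intervalIntegral

variable {E : Type*} [NormedAddCommGroup E] [NormedSpace ℝ E] [CompleteSpace E]
variable {S : ℝ → ℝ → E →L[ℝ] E} {ω : ℝ}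

lemma exp_neg_le_one {ω s : ℝ} (hω : 0 < ω) (hs : 0 ≤ s) : Real.exp (-ω * s) ≤ 1 := by
  rw [Real.exp_le_one_iff]
  nlinarith

lemma S_norm_exp (hnorm : ∀ l ∈ Set.Icc (0:ℝ) 1, ∀ t ≥ (0:ℝ), ‖S l t‖ ≤ Real.exp (-ω * t))
    {l : ℝ} (hl : l ∈ Set.Icc (0:ℝ) 1) {s : ℝ} (hs : 0 ≤ s) (x : E) :
    ‖S l s x‖ ≤ Real.exp (-ω * s) * ‖x‖ :=
  le_trans ((S l s).le_opNorm x) (mul_le_mul_of_nonneg_right (hnorm l hl s hs) (norm_nonneg x))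

lemma S_norm_le (hω : 0 < ω)
    (hnorm : ∀ l ∈ Set.Icc (0:ℝ) 1, ∀ t ≥ (0:ℝ), ‖S l t‖ ≤ Real.exp (-ω * t))
    {l : ℝ} (hl : l ∈ Set.Icc (0:ℝ) 1) {s : ℝ} (hs : 0 ≤ s) (x : E) :
    ‖S l s x‖ ≤ ‖x‖ := by
  refine le_trans (S_norm_exp hnorm hl hs x) ?_
  nlinarith [exp_neg_le_one hω hs, norm_nonneg x, Real.exp_pos (-ω * s)]

lemma S_add_apply (hsg2 : ∀ l ∈ Set.Icc (0:ℝ) 1, ∀ s ≥ (0:ℝ), ∀ t ≥ (0:ℝ),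
      S l (s + t) = (S l s).comp (S l t))
    {l : ℝ} (hl : l ∈ Set.Icc (0:ℝ) 1) {s u : ℝ} (hs : 0 ≤ s) (hu : 0 ≤ u) (x : E) :
    S l (s + u) x = S l s (S l u x) := by
  rw [hsg2 l hl s hs u hu]; rfl

/-- Joint continuity of `(s, y) ↦ S l s y` for fixed `l`. -/
lemma S_joint_cont (hω : 0 < ω)
    (hsgc : ∀ l ∈ Set.Icc (0:ℝ) 1, ∀ x : E, ContinuousOn (fun t => S l t x) (Set.Ici 0))
    (hnorm : ∀ l ∈ Set.Icc (0:ℝ) 1, ∀ t ≥ (0:ℝ), ‖S l t‖ ≤ Real.exp (-ω * t))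
    {l : ℝ} (hl : l ∈ Set.Icc (0:ℝ) 1) :
    ContinuousOn (fun p : ℝ × E => S l p.1 p.2) (Set.Ici (0:ℝ) ×ˢ (Set.univ : Set E)) := by
  rintro ⟨s₀, y₀⟩ ⟨hs₀, -⟩
  rw [Metric.continuousWithinAt_iff]
  intro ε hε
  have hc := hsgc l hl y₀ s₀ hs₀
  rw [Metric.continuousWithinAt_iff] at hc
  obtain ⟨δ₁, hδ₁, hδ⟩ := hc (ε/2) (by linarith)
  refine ⟨min δ₁ (ε/2), by positivity, ?_⟩
  rintro ⟨s, y⟩ ⟨hs, -⟩ hd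
  simp only at hs ⊢
  rw [Prod.dist_eq] at hd
  simp only [max_lt_iff, lt_min_iff] at hd
  have hd1 : dist s s₀ < δ₁ := hd.1.1
  have hd2 : dist y y₀ < ε/2 := hd.2.2
  have key : dist (S l s y) (S l s₀ y₀) ≤ dist y y₀ + dist (S l s y₀) (S l s₀ y₀) := by
    have h1 : dist (S l s y) (S l s y₀) ≤ dist y y₀ := by
      rw [dist_eq_norm, dist_eq_norm, ← map_sub]
      exact S_norm_le hω hnorm hl hs _
    calc dist (S l s y) (S l s₀ y₀) ≤ dist (S l s y) (S l s y₀) + dist (S l s y₀) (S l s₀ y₀) :=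
          dist_triangle _ _ _
    _ ≤ dist y y₀ + dist (S l s y₀) (S l s₀ y₀) := by linarith
  have := hδ hs hd1
  calc dist (S l s y) (S l s₀ y₀) ≤ dist y y₀ + dist (S l s y₀) (S l s₀ y₀) := key
  _ < ε/2 + ε/2 := by exact add_lt_add hd2 this
  _ = ε := by ring

/-- Continuity of `τ ↦ S l (b - τ) (f τ)` on `[p, q]` when `b - τ ≥ 0` there. -/
lemma S_comp_cont (hω : 0 < ω)
    (hsgc : ∀ l ∈ Set.Icc (0:ℝ) 1, ∀ x : E, ContinuousOn (fun t => S l t x) (Set.Ici 0))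
    (hnorm : ∀ l ∈ Set.Icc (0:ℝ) 1, ∀ t ≥ (0:ℝ), ‖S l t‖ ≤ Real.exp (-ω * t))
    {l : ℝ} (hl : l ∈ Set.Icc (0:ℝ) 1) {b p q : ℝ} (hqb : q ≤ b) {f : ℝ → E}
    (hf : ContinuousOn f (Set.Icc p q)) :
    ContinuousOn (fun τ => S l (b - τ) (f τ)) (Set.Icc p q) := by
  have h1 : ContinuousOn (fun τ => ((b - τ, f τ) : ℝ × E)) (Set.Icc p q) :=
    ContinuousOn.prodMk (Continuous.continuousOn (by continuity)) hf
  have h2 : Set.MapsTo (fun τ => ((b - τ, f τ) : ℝ × E)) (Set.Icc p q)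
      (Set.Ici (0:ℝ) ×ˢ (Set.univ : Set E)) := by
    rintro τ ⟨hτ1, hτ2⟩
    exact ⟨by simp; linarith, trivial⟩
  exact (S_joint_cont hω hsgc hnorm hl).comp h1 h2

lemma S_intInt (hsgc : ∀ l ∈ Set.Icc (0:ℝ) 1, ∀ x : E, ContinuousOn (fun t => S l t x) (Set.Ici 0))
    {l : ℝ} (hl : l ∈ Set.Icc (0:ℝ) 1) {p q : ℝ} (hp : 0 ≤ p) (hq : 0 ≤ q) (z : E) :
    IntervalIntegrable (fun u => S l u z) MeasureTheory.volume p q := by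
  apply ContinuousOn.intervalIntegrable
  exact (hsgc l hl z).mono (fun u hu => le_trans (le_min hp hq) hu.1)

end SemigroupAux
section BigTB

open Bornology Set MeasureTheory intervalIntegral

variable {E : Type*} [NormedAddCommGroup E] [NormedSpace ℝ E] [CompleteSpace E]
variable {S : ℝ → ℝ → E →L[ℝ] E} {ω : ℝ}

lemma g_integral_eq (hsg2 : ∀ l ∈ Set.Icc (0:ℝ) 1, ∀ s ≥ (0:ℝ), ∀ t ≥ (0:ℝ),
      S l (s + t) = (S l s).comp (S l t))
    (hsgc : ∀ l ∈ Set.Icc (0:ℝ) 1, ∀ x : E, ContinuousOn (fun t => S l t x) (Set.Ici 0))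
    {l : ℝ} (hl : l ∈ Set.Icc (0:ℝ) 1) {s h : ℝ} (hs : 0 ≤ s) (hh : 0 < h) (z : E) :
    (∫ u in s..(s+h), S l u z) = S l s (∫ u in (0:ℝ)..h, S l u z) := by
  calc (∫ u in s..(s+h), S l u z) = ∫ u in (0:ℝ)+s..h+s, S l u z := by
        rw [zero_add, add_comm h s]
  _ = ∫ u in (0:ℝ)..h, S l (u + s) z := (integral_comp_add_right (fun u => S l u z) s).symm
  _ = ∫ u in (0:ℝ)..h, S l s (S l u z) := by
      refine integral_congr fun u hu => ?_
      rw [Set.uIcc_of_le hh.le] at hu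
      rw [add_comm, S_add_apply hsg2 hl hs hu.1 z]
  _ = S l s (∫ u in (0:ℝ)..h, S l u z) :=
      ContinuousLinearMap.intervalIntegral_comp_comm _ (S_intInt hsgc hl le_rfl hh.le z)

lemma g_close (hω : 0 < ω)
    (hsg2 : ∀ l ∈ Set.Icc (0:ℝ) 1, ∀ s ≥ (0:ℝ), ∀ t ≥ (0:ℝ),
      S l (s + t) = (S l s).comp (S l t))
    (hsgc : ∀ l ∈ Set.Icc (0:ℝ) 1, ∀ x : E, ContinuousOn (fun t => S l t x) (Set.Ici 0))
    (hnorm : ∀ l ∈ Set.Icc (0:ℝ) 1, ∀ t ≥ (0:ℝ), ‖S l t‖ ≤ Real.exp (-ω * t))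
    {l : ℝ} (hl : l ∈ Set.Icc (0:ℝ) 1) {s h : ℝ} (hs : 0 ≤ s) (hh : 0 < h) (z : E) :
    ‖h⁻¹ • (∫ u in s..(s+h), S l u z) - S l s z‖
      ≤ h⁻¹ * ∫ u in (0:ℝ)..h, ‖S l u z - z‖ := by
  have key := g_integral_eq hsg2 hsgc hl hs hh z
  set W := ∫ u in (0:ℝ)..h, S l u z with hW
  have diff : h⁻¹ • (∫ u in s..(s+h), S l u z) - S l s z = h⁻¹ • (S l s (W - h • z)) := by
    rw [key, map_sub, _root_.map_smul, smul_sub, smul_smul, inv_mul_cancel₀ hh.ne', one_smul]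
  rw [diff, norm_smul, Real.norm_eq_abs, abs_of_nonneg (inv_nonneg.mpr hh.le)]
  refine mul_le_mul_of_nonneg_left ?_ (inv_nonneg.mpr hh.le)
  have hWz : W - h • z = ∫ u in (0:ℝ)..h, (S l u z - z) := by
    rw [integral_sub (S_intInt hsgc hl le_rfl hh.le z) intervalIntegrable_const,
      intervalIntegral.integral_const, sub_zero, hW]
  calc ‖S l s (W - h • z)‖ ≤ ‖W - h • z‖ := S_norm_le hω hnorm hl hs _
  _ = ‖∫ u in (0:ℝ)..h, (S l u z - z)‖ := by rw [hWz]
  _ ≤ ∫ u in (0:ℝ)..h, ‖S l u z - z‖ := norm_integral_le_integral_norm hh.le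

lemma eta_contOn (hω : 0 < ω)
    (hsgc : ∀ l ∈ Set.Icc (0:ℝ) 1, ∀ x : E, ContinuousOn (fun t => S l t x) (Set.Ici 0))
    (hnorm : ∀ l ∈ Set.Icc (0:ℝ) 1, ∀ t ≥ (0:ℝ), ‖S l t‖ ≤ Real.exp (-ω * t))
    (hresc : ∀ t ≥ (0:ℝ), ∀ x : E, ContinuousOn (fun l => S l t x) (Set.Icc 0 1))
    {h : ℝ} (hh : 0 < h) (z : E) :
    ContinuousOn (fun l => ∫ u in (0:ℝ)..h, ‖S l u z - z‖) (Set.Icc 0 1) := by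
  intro l₀ hl₀
  have hIoc : Set.uIoc (0:ℝ) h = Set.Ioc 0 h := Set.uIoc_of_le hh.le
  apply intervalIntegral.continuousWithinAt_of_dominated_interval
      (bound := fun _ => ‖z‖ + ‖z‖)
  · filter_upwards [eventually_mem_nhdsWithin] with l hl
    rw [hIoc]
    refine ContinuousOn.aestronglyMeasurable ?_ measurableSet_Ioc
    exact (((hsgc l hl z).mono fun u hu => hu.1.le).sub continuousOn_const).norm
  · filter_upwards [eventually_mem_nhdsWithin] with l hl
    refine Filter.Eventually.of_forall fun u hu => ?_
    rw [hIoc] at hu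
    rw [norm_norm]
    calc ‖S l u z - z‖ ≤ ‖S l u z‖ + ‖z‖ := norm_sub_le _ _
    _ ≤ ‖z‖ + ‖z‖ := by
        have := S_norm_le hω hnorm hl hu.1.le z
        linarith
  · exact intervalIntegrable_const
  · refine Filter.Eventually.of_forall fun u hu => ?_
    rw [hIoc] at hu
    exact (((hresc u hu.1.le z) l₀ hl₀).sub continuousWithinAt_const).norm

lemma gl_contWithin (hω : 0 < ω)
    (hsgc : ∀ l ∈ Set.Icc (0:ℝ) 1, ∀ x : E, ContinuousOn (fun t => S l t x) (Set.Ici 0))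
    (hnorm : ∀ l ∈ Set.Icc (0:ℝ) 1, ∀ t ≥ (0:ℝ), ‖S l t‖ ≤ Real.exp (-ω * t))
    (hresc : ∀ t ≥ (0:ℝ), ∀ x : E, ContinuousOn (fun l => S l t x) (Set.Icc 0 1))
    {h s : ℝ} (hh : 0 < h) (hs : 0 ≤ s) (z : E) {l₀ : ℝ} (hl₀ : l₀ ∈ Set.Icc (0:ℝ) 1) :
    ContinuousWithinAt (fun l => h⁻¹ • ∫ u in s..(s+h), S l u z) (Set.Icc 0 1) l₀ := by
  refine ContinuousWithinAt.const_smul ?_ _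
  have hIoc : Set.uIoc s (s+h) = Set.Ioc s (s+h) := Set.uIoc_of_le (by linarith)
  apply intervalIntegral.continuousWithinAt_of_dominated_interval (bound := fun _ => ‖z‖)
  · filter_upwards [eventually_mem_nhdsWithin] with l hl
    rw [hIoc]
    refine ContinuousOn.aestronglyMeasurable ?_ measurableSet_Ioc
    exact (hsgc l hl z).mono fun u hu => le_trans hs hu.1.le
  · filter_upwards [eventually_mem_nhdsWithin] with l hl
    refine Filter.Eventually.of_forall fun u hu => ?_
    rw [hIoc] at hu
    exact S_norm_le hω hnorm hl (le_trans hs hu.1.le) z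
  · exact intervalIntegrable_const
  · refine Filter.Eventually.of_forall fun u hu => ?_
    rw [hIoc] at hu
    exact (hresc u (le_trans hs hu.1.le) z) l₀ hl₀

lemma g_lip (hω : 0 < ω)
    (hsgc : ∀ l ∈ Set.Icc (0:ℝ) 1, ∀ x : E, ContinuousOn (fun t => S l t x) (Set.Ici 0))
    (hnorm : ∀ l ∈ Set.Icc (0:ℝ) 1, ∀ t ≥ (0:ℝ), ‖S l t‖ ≤ Real.exp (-ω * t))
    {l : ℝ} (hl : l ∈ Set.Icc (0:ℝ) 1) {h s s' : ℝ} (hh : 0 < h) (hs : 0 ≤ s) (hs' : 0 ≤ s')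
    (z : E) :
    ‖(h⁻¹ • ∫ u in s..(s+h), S l u z) - h⁻¹ • ∫ u in s'..(s'+h), S l u z‖
      ≤ h⁻¹ * ((‖z‖ + ‖z‖) * |s - s'|) := by
  rw [← smul_sub, norm_smul, Real.norm_eq_abs, abs_of_nonneg (inv_nonneg.mpr hh.le)]
  refine mul_le_mul_of_nonneg_left ?_ (inv_nonneg.mpr hh.le)
  have hnb : ∀ p q : ℝ, 0 ≤ p → 0 ≤ q → ‖∫ u in p..q, S l u z‖ ≤ ‖z‖ * |q - p| := by
    intro p q hp hq
    refine intervalIntegral.norm_integral_le_of_norm_le_const fun u hu => ?_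
    have hu0 : 0 ≤ u := le_trans (le_min hp hq) (le_of_lt hu.1)
    exact S_norm_le hω hnorm hl hu0 z
  have hsub : ((∫ u in s..(s+h), S l u z) - ∫ u in s'..(s'+h), S l u z)
      = (∫ u in s..s', S l u z) - ∫ u in (s+h)..(s'+h), S l u z :=
    integral_interval_sub_interval_comm (S_intInt hsgc hl hs (by linarith) z)
      (S_intInt hsgc hl hs' (by linarith) z) (S_intInt hsgc hl hs hs' z)
  rw [hsub]
  calc ‖(∫ u in s..s', S l u z) - ∫ u in (s+h)..(s'+h), S l u z‖
      ≤ ‖∫ u in s..s', S l u z‖ + ‖∫ u in (s+h)..(s'+h), S l u z‖ := norm_sub_le _ _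
  _ ≤ ‖z‖ * |s' - s| + ‖z‖ * |s' + h - (s + h)| :=
      add_le_add (hnb s s' hs hs') (hnb (s+h) (s'+h) (by linarith) (by linarith))
  _ = (‖z‖ + ‖z‖) * |s - s'| := by
      rw [show s' + h - (s + h) = s' - s by ring, abs_sub_comm s' s]; ring

lemma G_compact (hω : 0 < ω)
    (hsgc : ∀ l ∈ Set.Icc (0:ℝ) 1, ∀ x : E, ContinuousOn (fun t => S l t x) (Set.Ici 0))
    (hnorm : ∀ l ∈ Set.Icc (0:ℝ) 1, ∀ t ≥ (0:ℝ), ‖S l t‖ ≤ Real.exp (-ω * t))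
    (hresc : ∀ t ≥ (0:ℝ), ∀ x : E, ContinuousOn (fun l => S l t x) (Set.Icc 0 1))
    {h a : ℝ} (hh : 0 < h) (ha : 0 ≤ a) (z : E) :
    IsCompact ((fun p : ℝ × ℝ => h⁻¹ • ∫ u in p.2..(p.2+h), S p.1 u z) ''
      (Set.Icc (0:ℝ) 1 ×ˢ Set.Icc 0 a)) := by
  refine IsCompact.image_of_continuousOn (isCompact_Icc.prod isCompact_Icc) ?_
  rintro ⟨l₀, s₀⟩ ⟨hl₀, hs₀⟩
  rw [Metric.continuousWithinAt_iff]
  intro ε hε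
  set C := h⁻¹ * (‖z‖ + ‖z‖) + 1 with hC
  have hCpos : 0 < C := by positivity
  have hcl := gl_contWithin hω hsgc hnorm hresc hh hs₀.1 z hl₀
  rw [Metric.continuousWithinAt_iff] at hcl
  obtain ⟨δ₁, hδ₁, hδ⟩ := hcl (ε/2) (by linarith)
  refine ⟨min δ₁ (ε/(2*C)), by positivity, ?_⟩
  rintro ⟨l, s⟩ ⟨hlm, hsm⟩ hd
  rw [Prod.dist_eq] at hd
  simp only [max_lt_iff, lt_min_iff] at hd
  simp only at hlm hsm ⊢
  have step1 : dist (h⁻¹ • ∫ u in s..(s+h), S l u z) (h⁻¹ • ∫ u in s₀..(s₀+h), S l u z)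
      < ε/2 := by
    rw [dist_eq_norm]
    calc ‖(h⁻¹ • ∫ u in s..(s+h), S l u z) - h⁻¹ • ∫ u in s₀..(s₀+h), S l u z‖
        ≤ h⁻¹ * ((‖z‖ + ‖z‖) * |s - s₀|) := g_lip hω hsgc hnorm hlm hh hsm.1 hs₀.1 z
    _ ≤ C * |s - s₀| := by
        rw [hC, ← mul_assoc]
        have h1 : (0:ℝ) ≤ |s - s₀| := abs_nonneg _
        nlinarith [mul_nonneg (mul_nonneg (inv_nonneg.mpr hh.le) (by positivity : (0:ℝ) ≤ ‖z‖ + ‖z‖)) h1]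
    _ < C * (ε/(2*C)) := by
        have := hd.2.2
        rw [Real.dist_eq] at this
        exact mul_lt_mul_of_pos_left this hCpos
    _ = ε/2 := by field_simp
  have step2 : dist (h⁻¹ • ∫ u in s₀..(s₀+h), S l u z) (h⁻¹ • ∫ u in s₀..(s₀+h), S l₀ u z)
      < ε/2 := hδ hlm hd.1.1
  calc dist (h⁻¹ • ∫ u in s..(s+h), S l u z) (h⁻¹ • ∫ u in s₀..(s₀+h), S l₀ u z)
      ≤ dist (h⁻¹ • ∫ u in s..(s+h), S l u z) (h⁻¹ • ∫ u in s₀..(s₀+h), S l u z)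
        + dist (h⁻¹ • ∫ u in s₀..(s₀+h), S l u z) (h⁻¹ • ∫ u in s₀..(s₀+h), S l₀ u z) :=
        dist_triangle _ _ _
  _ < ε/2 + ε/2 := add_lt_add step1 step2
  _ = ε := by ring

end BigTB
section BigTB2

open Bornology Set MeasureTheory intervalIntegral

variable {E : Type*} [NormedAddCommGroup E] [NormedSpace ℝ E] [CompleteSpace E]
variable {S : ℝ → ℝ → E →L[ℝ] E} {ω : ℝ}

lemma bigTB (hω : 0 < ω)
    (hsg1 : ∀ l ∈ Set.Icc (0:ℝ) 1, S l 0 = ContinuousLinearMap.id ℝ E)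
    (hsg2 : ∀ l ∈ Set.Icc (0:ℝ) 1, ∀ s ≥ (0:ℝ), ∀ t ≥ (0:ℝ),
      S l (s + t) = (S l s).comp (S l t))
    (hsgc : ∀ l ∈ Set.Icc (0:ℝ) 1, ∀ x : E, ContinuousOn (fun t => S l t x) (Set.Ici 0))
    (hnorm : ∀ l ∈ Set.Icc (0:ℝ) 1, ∀ t ≥ (0:ℝ), ‖S l t‖ ≤ Real.exp (-ω * t))
    (hresc : ∀ t ≥ (0:ℝ), ∀ x : E, ContinuousOn (fun l => S l t x) (Set.Icc 0 1))
    (z : E) {a : ℝ} (ha : 0 ≤ a) :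
    TotallyBounded {y : E | ∃ l ∈ Set.Icc (0:ℝ) 1, ∃ s ∈ Set.Icc 0 a, y = S l s z} := by
  classical
  rw [Metric.totallyBounded_iff]
  intro ε hε
  have key : ∀ l₀ : ℝ, ∃ h > 0, ∃ δ > 0, l₀ ∈ Set.Icc (0:ℝ) 1 → ∀ l ∈ Set.Icc (0:ℝ) 1,
      |l - l₀| < δ → h⁻¹ * (∫ u in (0:ℝ)..h, ‖S l u z - z‖) < ε/3 := by
    intro l₀
    by_cases hl₀ : l₀ ∈ Set.Icc (0:ℝ) 1
    swap
    · exact ⟨1, one_pos, 1, one_pos, fun h => absurd h hl₀⟩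
    have hc := hsgc l₀ hl₀ z 0 (Set.self_mem_Ici)
    rw [Metric.continuousWithinAt_iff] at hc
    obtain ⟨δ₀, hδ₀, hδ⟩ := hc (ε/7) (by linarith)
    set h := δ₀/2 with hhdef
    have hh : 0 < h := by positivity
    have hS0 : S l₀ 0 z = z := by rw [hsg1 l₀ hl₀]; rfl
    have hbound : ∀ u ∈ Set.uIoc (0:ℝ) h, ‖‖S l₀ u z - z‖‖ ≤ ε/7 := by
      intro u hu
      rw [Set.uIoc_of_le hh.le] at hu
      rw [norm_norm]
      have := hδ (Set.mem_Ici.mpr hu.1.le) (by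
        rw [Real.dist_eq, sub_zero, abs_of_nonneg hu.1.le]
        calc u ≤ h := hu.2
        _ < δ₀ := by rw [hhdef]; linarith)
      rw [dist_eq_norm, hS0] at this
      exact this.le
    have hintle : (∫ u in (0:ℝ)..h, ‖S l₀ u z - z‖) ≤ ε/7 * h := by
      calc (∫ u in (0:ℝ)..h, ‖S l₀ u z - z‖) ≤ ‖∫ u in (0:ℝ)..h, ‖S l₀ u z - z‖‖ :=
            le_abs_self _
      _ ≤ ε/7 * |h - 0| := intervalIntegral.norm_integral_le_of_norm_le_const hbound
      _ = ε/7 * h := by rw [sub_zero, abs_of_nonneg hh.le]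
    have hφ0 : h⁻¹ * (∫ u in (0:ℝ)..h, ‖S l₀ u z - z‖) ≤ ε/7 := by
      rw [← mul_le_mul_iff_right₀ hh]
      calc h * (h⁻¹ * ∫ u in (0:ℝ)..h, ‖S l₀ u z - z‖)
          = ∫ u in (0:ℝ)..h, ‖S l₀ u z - z‖ := by
            field_simp
      _ ≤ ε/7 * h := hintle
      _ = h * (ε/7) := by ring
    -- continuity of l ↦ h⁻¹ * ∫ ...
    have hcont : ContinuousWithinAt (fun l => h⁻¹ * ∫ u in (0:ℝ)..h, ‖S l u z - z‖)
        (Set.Icc 0 1) l₀ :=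
      ((eta_contOn hω hsgc hnorm hresc hh z) l₀ hl₀).const_smul h⁻¹
    rw [Metric.continuousWithinAt_iff] at hcont
    obtain ⟨δ₁, hδ₁, hδc⟩ := hcont (ε/3 - ε/7) (by linarith)
    refine ⟨h, hh, δ₁, hδ₁, fun _ l hl hdist => ?_⟩
    have := hδc hl (by rwa [Real.dist_eq])
    rw [Real.dist_eq] at this
    have habs := (abs_sub_lt_iff.mp this).1
    linarith
  choose hfun hhpos δfun hδpos hsmall using key
  -- finite subcover of [0,1]
  have hcov : Set.Icc (0:ℝ) 1 ⊆ ⋃ j : ↥(Set.Icc (0:ℝ) 1), Metric.ball (j : ℝ) (δfun j) := by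
    intro l hl
    exact Set.mem_iUnion.mpr ⟨⟨l, hl⟩, Metric.mem_ball_self (hδpos l)⟩
  obtain ⟨J, hJ⟩ := isCompact_Icc.elim_finite_subcover
    (fun j : ↥(Set.Icc (0:ℝ) 1) => Metric.ball (j : ℝ) (δfun j)) (fun j => Metric.isOpen_ball) hcov
  -- for each j, a finite ε/3-net of the compact set G
  have hnet : ∀ j : ↥(Set.Icc (0:ℝ) 1), ∃ t : Set E, t.Finite ∧
      ((fun p : ℝ × ℝ => (hfun j)⁻¹ • ∫ u in p.2..(p.2+(hfun j)), S p.1 u z) ''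
        (Set.Icc (0:ℝ) 1 ×ˢ Set.Icc 0 a)) ⊆ ⋃ y ∈ t, Metric.ball y (ε/3) := by
    intro j
    exact Metric.totallyBounded_iff.mp
      (G_compact hω hsgc hnorm hresc (hhpos j) ha z).totallyBounded (ε/3) (by linarith)
  choose tset htfin htsub using hnet
  refine ⟨⋃ j ∈ J, tset j, Set.Finite.biUnion J.finite_toSet (fun j _ => htfin j), ?_⟩
  rintro y ⟨l, hl, s, hs, rfl⟩
  obtain ⟨j, hjJ, hjball⟩ : ∃ j ∈ J, l ∈ Metric.ball (j : ℝ) (δfun j) := by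
    simpa using hJ hl
  set h := hfun j with hhj
  have hsmallj := hsmall j (Subtype.mem j) l hl (by
    have := Metric.mem_ball.mp hjball
    rwa [Real.dist_eq] at this)
  have hgmem : ((h)⁻¹ • ∫ u in s..(s+h), S l u z) ∈
      ((fun p : ℝ × ℝ => (hfun j)⁻¹ • ∫ u in p.2..(p.2+(hfun j)), S p.1 u z) ''
        (Set.Icc (0:ℝ) 1 ×ˢ Set.Icc 0 a)) :=
    ⟨(l, s), ⟨hl, hs⟩, rfl⟩
  obtain ⟨y₀, hy₀, hdist⟩ := Set.mem_iUnion₂.mp (htsub j hgmem)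
  refine Set.mem_iUnion₂.mpr ⟨y₀, Set.mem_iUnion₂.mpr ⟨j, hjJ, hy₀⟩, ?_⟩
  rw [Metric.mem_ball] at hdist ⊢
  have hclose : dist (S l s z) ((h)⁻¹ • ∫ u in s..(s+h), S l u z) < ε/3 := by
    rw [dist_eq_norm, norm_sub_rev]
    exact lt_of_le_of_lt (g_close hω hsg2 hsgc hnorm hl hs.1 (hhpos j) z) hsmallj
  calc dist (S l s z) y₀ ≤ dist (S l s z) ((h)⁻¹ • ∫ u in s..(s+h), S l u z)
        + dist ((h)⁻¹ • ∫ u in s..(s+h), S l u z) y₀ := dist_triangle _ _ _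
  _ < ε/3 + ε/3 := add_lt_add hclose hdist
  _ < ε := by linarith

end BigTB2
section HmncS

open Bornology Set MeasureTheory intervalIntegral Pointwise

variable {E : Type*} [NormedAddCommGroup E] [NormedSpace ℝ E] [CompleteSpace E]
variable {S : ℝ → ℝ → E →L[ℝ] E} {ω : ℝ}

/-- Transport of hmnc through the semigroup with time varying in `[0,a]`. -/
lemma hmnc_S_set (hω : 0 < ω)
    (hsg1 : ∀ l ∈ Set.Icc (0:ℝ) 1, S l 0 = ContinuousLinearMap.id ℝ E)
    (hsg2 : ∀ l ∈ Set.Icc (0:ℝ) 1, ∀ s ≥ (0:ℝ), ∀ t ≥ (0:ℝ),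
      S l (s + t) = (S l s).comp (S l t))
    (hsgc : ∀ l ∈ Set.Icc (0:ℝ) 1, ∀ x : E, ContinuousOn (fun t => S l t x) (Set.Ici 0))
    (hnorm : ∀ l ∈ Set.Icc (0:ℝ) 1, ∀ t ≥ (0:ℝ), ‖S l t‖ ≤ Real.exp (-ω * t))
    (hresc : ∀ t ≥ (0:ℝ), ∀ x : E, ContinuousOn (fun l => S l t x) (Set.Icc 0 1))
    {A D : Set E} (hA : IsBounded A) {a : ℝ} (ha : 0 ≤ a)
    (hD : ∀ y ∈ D, ∃ l ∈ Set.Icc (0:ℝ) 1, ∃ s ∈ Set.Icc 0 a, ∃ v ∈ A, y = S l s v) :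
    hmnc D ≤ hmnc A := by
  refine le_of_forall_pos_le_add fun ε hε => ?_
  obtain ⟨hrpos, SA, hSA⟩ := cov_of_hmnc_lt hA (show hmnc A < hmnc A + ε by linarith)
  refine hmnc_le_near_tb SA
    (fun zi => {y : E | ∃ l ∈ Set.Icc (0:ℝ) 1, ∃ s ∈ Set.Icc 0 a, y = S l s zi})
    (fun zi _ => bigTB hω hsg1 hsg2 hsgc hnorm hresc zi ha) (by linarith [hmnc_nonneg A]) ?_
  rintro y hy
  obtain ⟨l, hl, s, hs, v, hv, rfl⟩ := hD y hy
  obtain ⟨zi, hzi, hvz⟩ := Set.mem_iUnion₂.mp (hSA hv)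
  refine ⟨zi, hzi, S l s zi, ⟨l, hl, s, hs, rfl⟩, ?_⟩
  rw [Metric.mem_ball, dist_eq_norm] at hvz
  calc ‖S l s v - S l s zi‖ = ‖S l s (v - zi)‖ := by rw [map_sub]
  _ ≤ ‖v - zi‖ := S_norm_le hω hnorm hl hs.1 _
  _ ≤ hmnc A + ε := hvz.le

/-- Transport of hmnc through the semigroup at a fixed time, with exponential decay factor. -/
lemma hmnc_S_fixed (hω : 0 < ω)
    (hnorm : ∀ l ∈ Set.Icc (0:ℝ) 1, ∀ t ≥ (0:ℝ), ‖S l t‖ ≤ Real.exp (-ω * t))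
    (hresc : ∀ t ≥ (0:ℝ), ∀ x : E, ContinuousOn (fun l => S l t x) (Set.Icc 0 1))
    {A D : Set E} (hA : IsBounded A) {s : ℝ} (hs : 0 ≤ s)
    (hD : ∀ y ∈ D, ∃ l ∈ Set.Icc (0:ℝ) 1, ∃ v ∈ A, y = S l s v) :
    hmnc D ≤ Real.exp (-ω * s) * hmnc A := by
  refine le_of_forall_pos_le_add fun ε hε => ?_
  obtain ⟨hrpos, SA, hSA⟩ := cov_of_hmnc_lt hA (show hmnc A < hmnc A + ε by linarith)
  have hexp : Real.exp (-ω * s) ≤ 1 := exp_neg_le_one hω hs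
  have hexp0 : 0 < Real.exp (-ω * s) := Real.exp_pos _
  have key : hmnc D ≤ Real.exp (-ω * s) * (hmnc A + ε) := by
    refine hmnc_le_near_tb SA
      (fun zi => (fun l => S l s zi) '' (Set.Icc (0:ℝ) 1))
      (fun zi _ => ((isCompact_Icc).image_of_continuousOn (hresc s hs zi)).totallyBounded)
      (by positivity) ?_
    rintro y hy
    obtain ⟨l, hl, v, hv, rfl⟩ := hD y hy
    obtain ⟨zi, hzi, hvz⟩ := Set.mem_iUnion₂.mp (hSA hv)
    refine ⟨zi, hzi, S l s zi, ⟨l, hl, rfl⟩, ?_⟩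
    rw [Metric.mem_ball, dist_eq_norm] at hvz
    calc ‖S l s v - S l s zi‖ = ‖S l s (v - zi)‖ := by rw [map_sub]
    _ ≤ Real.exp (-ω * s) * ‖v - zi‖ := S_norm_exp hnorm hl hs _
    _ ≤ Real.exp (-ω * s) * (hmnc A + ε) :=
        mul_le_mul_of_nonneg_left hvz.le hexp0.le
  calc hmnc D ≤ Real.exp (-ω * s) * (hmnc A + ε) := key
  _ = Real.exp (-ω * s) * hmnc A + Real.exp (-ω * s) * ε := by ring
  _ ≤ Real.exp (-ω * s) * hmnc A + ε := by nlinarith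

/-- hmnc bound for subsets of a scaled closed convex hull. -/
lemma hmnc_smul_cch {K D : Set E} (hK : IsBounded K) {h : ℝ} (hh : 0 < h)
    (hD : ∀ y ∈ D, ∃ w ∈ closure (convexHull ℝ K), y = h • w) :
    hmnc D ≤ h * hmnc K := by
  refine le_of_forall_pos_le_add fun ε hε => ?_
  have hε₁ : 0 < ε / (2 * h) := by positivity
  set ε₁ := ε / (2 * h) with hε₁def
  obtain ⟨hrpos, SK, hSK⟩ := cov_of_hmnc_lt hK (show hmnc K < hmnc K + ε₁ by linarith)
  set C := convexHull ℝ (↑SK : Set E) with hC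
  have hCcomp : IsCompact C := (SK.finite_toSet).isCompact_convexHull ℝ
  have hhull : convexHull ℝ K ⊆ C + Metric.ball (0:E) (hmnc K + ε₁) := by
    refine convexHull_min ?_ ((convex_convexHull ℝ _).add (convex_ball 0 _))
    intro v hv
    obtain ⟨zi, hzi, hvz⟩ := Set.mem_iUnion₂.mp (hSK hv)
    refine Set.mem_add.mpr ⟨zi, subset_convexHull ℝ _ hzi, v - zi, ?_, by abel⟩
    rw [Metric.mem_ball, dist_eq_norm, sub_zero]
    rw [Metric.mem_ball, dist_eq_norm] at hvz
    exact hvz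
  have happrox : ∀ w ∈ closure (convexHull ℝ K), ∃ u ∈ C, ‖w - u‖ ≤ hmnc K + 2 * ε₁ := by
    intro w hw
    obtain ⟨w', hw', hww'⟩ := Metric.mem_closure_iff.mp hw ε₁ hε₁
    obtain ⟨u, hu, b, hb, hw'eq⟩ := Set.mem_add.mp (hhull hw')
    refine ⟨u, hu, ?_⟩
    rw [Metric.mem_ball, dist_eq_norm, sub_zero] at hb
    rw [dist_eq_norm] at hww'
    calc ‖w - u‖ ≤ ‖w - w'‖ + ‖w' - u‖ := norm_sub_le_norm_sub_add_norm_sub _ _ _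
    _ ≤ ε₁ + ‖b‖ := by
        have h2 : w' - u = b := by rw [← hw'eq]; abel
        rw [h2]
        exact add_le_add hww'.le le_rfl
    _ ≤ ε₁ + (hmnc K + ε₁) := by linarith
    _ = hmnc K + 2 * ε₁ := by ring
  have key : hmnc D ≤ h * (hmnc K + 2 * ε₁) := by
    refine hmnc_le_near_tb ({0} : Finset ℕ) (fun _ => h • C)
      (fun _ _ => ((hCcomp.smul h)).totallyBounded)
      (mul_nonneg hh.le (by linarith [hmnc_nonneg K])) ?_
    rintro y hy
    obtain ⟨w, hw, rfl⟩ := hD y hy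
    obtain ⟨u, hu, hwu⟩ := happrox w hw
    refine ⟨0, Finset.mem_singleton_self 0, h • u, Set.smul_mem_smul_set hu, ?_⟩
    rw [← smul_sub, norm_smul, Real.norm_eq_abs, abs_of_pos hh]
    exact mul_le_mul_of_nonneg_left hwu hh.le
  calc hmnc D ≤ h * (hmnc K + 2 * ε₁) := key
  _ = h * hmnc K + ε := by rw [hε₁def]; field_simp

/-- The interval integral lies in `h •` the closed convex hull of the values. -/
lemma integral_mem_smul_cch {f : ℝ → E} {K : Set E} {σ h : ℝ} (hh : 0 < h)
    (hf : ContinuousOn f (Set.Icc σ (σ + h)))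
    (hmem : ∀ τ ∈ Set.Ioc σ (σ + h), f τ ∈ K) :
    ∃ w ∈ closure (convexHull ℝ K), (∫ τ in σ..(σ + h), f τ) = h • w := by
  set μ := MeasureTheory.volume.restrict (Set.Ioc σ (σ + h)) with hμ
  have hμuniv : μ Set.univ = ENNReal.ofReal h := by
    rw [hμ, MeasureTheory.Measure.restrict_apply_univ, Real.volume_Ioc]
    norm_num
  have hfin : IsFiniteMeasure μ := ⟨by rw [hμuniv]; exact ENNReal.ofReal_lt_top⟩
  have hne : NeZero μ := ⟨by
    intro hzero
    have := hμuniv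
    rw [hzero] at this
    simp only [MeasureTheory.Measure.coe_zero, Pi.zero_apply] at this
    have : ENNReal.ofReal h = 0 := this.symm
    rw [ENNReal.ofReal_eq_zero] at this
    linarith⟩
  have hint : MeasureTheory.Integrable f μ := by
    rw [hμ, ← MeasureTheory.IntegrableOn]
    exact (hf.integrableOn_Icc).mono_set Set.Ioc_subset_Icc_self
  have havg : (⨍ x, f x ∂μ) ∈ closure (convexHull ℝ K) := by
    refine Convex.average_mem ((convex_convexHull ℝ K).closure) isClosed_closure ?_ hint
    rw [hμ, MeasureTheory.ae_restrict_iff' measurableSet_Ioc]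
    exact Filter.Eventually.of_forall fun τ hτ =>
      subset_closure (subset_convexHull ℝ K (hmem τ hτ))
  refine ⟨⨍ x, f x ∂μ, havg, ?_⟩
  have h1 : (∫ τ in σ..(σ + h), f τ) = ∫ x, f x ∂μ := by
    rw [intervalIntegral.integral_of_le (by linarith), hμ]
  rw [h1, MeasureTheory.average_eq, MeasureTheory.measureReal_def, hμuniv, ENNReal.toReal_ofReal hh.le, smul_smul,
    mul_inv_cancel₀ hh.ne', one_smul]

end HmncS
section Flow

open Bornology Set MeasureTheory intervalIntegral

variable {E : Type*} [NormedAddCommGroup E] [NormedSpace ℝ E] [CompleteSpace E]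
variable {S : ℝ → ℝ → E →L[ℝ] E} {ω : ℝ} {T : ℝ} {F : ℝ → E → ℝ → E} {sol : E → ℝ → ℝ → E}

/-- Continuity of the composed integrand `τ ↦ F τ (sol x l τ) l`. -/
lemma solF_cont (hFc : Continuous fun p : ℝ × E × ℝ => F p.1 p.2.1 p.2.2)
    (hsolc : ∀ x : E, ∀ l ∈ Set.Icc (0:ℝ) 1, ContinuousOn (sol x l) (Set.Icc 0 T))
    (x : E) {l : ℝ} (hl : l ∈ Set.Icc (0:ℝ) 1) :
    ContinuousOn (fun τ => F τ (sol x l τ) l) (Set.Icc 0 T) := by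
  have h1 : ContinuousOn (fun τ => ((τ, sol x l τ, l) : ℝ × E × ℝ)) (Set.Icc 0 T) :=
    (continuousOn_id).prodMk ((hsolc x l hl).prodMk continuousOn_const)
  exact hFc.comp_continuousOn h1

lemma S_solF_cont (hω : 0 < ω)
    (hsgc : ∀ l ∈ Set.Icc (0:ℝ) 1, ∀ x : E, ContinuousOn (fun t => S l t x) (Set.Ici 0))
    (hnorm : ∀ l ∈ Set.Icc (0:ℝ) 1, ∀ t ≥ (0:ℝ), ‖S l t‖ ≤ Real.exp (-ω * t))
    (hFc : Continuous fun p : ℝ × E × ℝ => F p.1 p.2.1 p.2.2)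
    (hsolc : ∀ x : E, ∀ l ∈ Set.Icc (0:ℝ) 1, ContinuousOn (sol x l) (Set.Icc 0 T))
    (x : E) {l : ℝ} (hl : l ∈ Set.Icc (0:ℝ) 1) {b p q : ℝ} (h0p : 0 ≤ p) (hpq : p ≤ q)
    (hqb : q ≤ b) (hqT : q ≤ T) :
    ContinuousOn (fun τ => S l (b - τ) (F τ (sol x l τ) l)) (Set.Icc p q) :=
  S_comp_cont hω hsgc hnorm hl hqb
    (((solF_cont hFc hsolc x hl)).mono (Set.Icc_subset_Icc h0p hqT))

/-- The flow (cocycle) property of mild solutions. -/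
lemma sol_flow (hω : 0 < ω)
    (hsg2 : ∀ l ∈ Set.Icc (0:ℝ) 1, ∀ s ≥ (0:ℝ), ∀ t ≥ (0:ℝ),
      S l (s + t) = (S l s).comp (S l t))
    (hsgc : ∀ l ∈ Set.Icc (0:ℝ) 1, ∀ x : E, ContinuousOn (fun t => S l t x) (Set.Ici 0))
    (hnorm : ∀ l ∈ Set.Icc (0:ℝ) 1, ∀ t ≥ (0:ℝ), ‖S l t‖ ≤ Real.exp (-ω * t))
    (hFc : Continuous fun p : ℝ × E × ℝ => F p.1 p.2.1 p.2.2)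
    (hsolc : ∀ x : E, ∀ l ∈ Set.Icc (0:ℝ) 1, ContinuousOn (sol x l) (Set.Icc 0 T))
    (hmild : ∀ x : E, ∀ l ∈ Set.Icc (0:ℝ) 1, ∀ t ∈ Set.Icc (0:ℝ) T,
      sol x l t = S l t x + ∫ τ in (0:ℝ)..t, S l (t - τ) (F τ (sol x l τ) l))
    (x : E) {l : ℝ} (hl : l ∈ Set.Icc (0:ℝ) 1) {σ t : ℝ} (h0 : 0 ≤ σ) (hσt : σ ≤ t)
    (htT : t ≤ T) :
    sol x l t = S l (t - σ) (sol x l σ)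
      + ∫ τ in σ..t, S l (t - τ) (F τ (sol x l τ) l) := by
  have h0t : 0 ≤ t := le_trans h0 hσt
  have hσT : σ ≤ T := le_trans hσt htT
  have hm_t := hmild x l hl t ⟨h0t, htT⟩
  have hm_σ := hmild x l hl σ ⟨h0, hσT⟩
  have hint1 : IntervalIntegrable (fun τ => S l (t - τ) (F τ (sol x l τ) l))
      MeasureTheory.volume 0 σ := by
    apply ContinuousOn.intervalIntegrable
    rw [Set.uIcc_of_le h0]
    exact S_solF_cont hω hsgc hnorm hFc hsolc x hl le_rfl h0 hσt hσT
  have hint2 : IntervalIntegrable (fun τ => S l (t - τ) (F τ (sol x l τ) l))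
      MeasureTheory.volume σ t := by
    apply ContinuousOn.intervalIntegrable
    rw [Set.uIcc_of_le hσt]
    exact S_solF_cont hω hsgc hnorm hFc hsolc x hl h0 hσt le_rfl htT
  have hsplit : (∫ τ in (0:ℝ)..t, S l (t - τ) (F τ (sol x l τ) l))
      = (∫ τ in (0:ℝ)..σ, S l (t - τ) (F τ (sol x l τ) l))
        + ∫ τ in σ..t, S l (t - τ) (F τ (sol x l τ) l) :=
    (integral_add_adjacent_intervals hint1 hint2).symm
  have hfirst : (∫ τ in (0:ℝ)..σ, S l (t - τ) (F τ (sol x l τ) l))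
      = S l (t - σ) (∫ τ in (0:ℝ)..σ, S l (σ - τ) (F τ (sol x l τ) l)) := by
    have hcongr : (∫ τ in (0:ℝ)..σ, S l (t - τ) (F τ (sol x l τ) l))
        = ∫ τ in (0:ℝ)..σ, S l (t - σ) (S l (σ - τ) (F τ (sol x l τ) l)) := by
      refine integral_congr fun τ hτ => ?_
      rw [Set.uIcc_of_le h0] at hτ
      have heq : t - τ = (t - σ) + (σ - τ) := by ring
      rw [heq, S_add_apply hsg2 hl (by linarith) (by linarith [hτ.2])]
    rw [hcongr]
    refine ContinuousLinearMap.intervalIntegral_comp_comm _ ?_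
    apply ContinuousOn.intervalIntegrable
    rw [Set.uIcc_of_le h0]
    exact S_solF_cont hω hsgc hnorm hFc hsolc x hl le_rfl h0 le_rfl hσT
  have hsg : S l t x = S l (t - σ) (S l σ x) := by
    have : t = (t - σ) + σ := by ring
    rw [this, S_add_apply hsg2 hl (by linarith) h0]
    norm_num
  rw [hm_t, hsplit, hfirst, hsg, hm_σ, map_add]
  abel

/-- A priori bound of mild solutions. -/
lemma sol_aprior (hω : 0 < ω)
    (hsgc : ∀ l ∈ Set.Icc (0:ℝ) 1, ∀ x : E, ContinuousOn (fun t => S l t x) (Set.Ici 0))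
    (hnorm : ∀ l ∈ Set.Icc (0:ℝ) 1, ∀ t ≥ (0:ℝ), ‖S l t‖ ≤ Real.exp (-ω * t))
    {c : ℝ} (hc : 0 < c) (hT : 0 < T)
    (hFg : ∀ t ∈ Set.Icc (0:ℝ) T, ∀ x : E, ∀ l ∈ Set.Icc (0:ℝ) 1,
      ‖F t x l‖ ≤ c * (1 + ‖x‖))
    (hFc : Continuous fun p : ℝ × E × ℝ => F p.1 p.2.1 p.2.2)
    (hsolc : ∀ x : E, ∀ l ∈ Set.Icc (0:ℝ) 1, ContinuousOn (sol x l) (Set.Icc 0 T))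
    (hmild : ∀ x : E, ∀ l ∈ Set.Icc (0:ℝ) 1, ∀ t ∈ Set.Icc (0:ℝ) T,
      sol x l t = S l t x + ∫ τ in (0:ℝ)..t, S l (t - τ) (F τ (sol x l τ) l))
    (x : E) {l : ℝ} (hl : l ∈ Set.Icc (0:ℝ) 1) {τ : ℝ} (hτ : τ ∈ Set.Icc 0 T) :
    ‖sol x l τ‖ ≤ (‖x‖ + c * T) * Real.exp (c * T) := by
  -- clamped norm function, globally continuous
  set f : ℝ → ℝ := fun s => ‖sol x l (max 0 (min s T))‖ with hf
  have hclamp : Continuous fun s : ℝ => max 0 (min s T) :=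
    continuous_const.max (continuous_id.min continuous_const)
  have hmaps : ∀ s : ℝ, max 0 (min s T) ∈ Set.Icc (0:ℝ) T := fun s =>
    ⟨le_max_left _ _, max_le (by linarith) (min_le_right _ _)⟩
  have hfc : Continuous f := by
    have : Continuous fun s : ℝ => sol x l (max 0 (min s T)) :=
      (hsolc x l hl).comp_continuous hclamp hmaps
    exact this.norm
  have hfnonneg : ∀ s, 0 ≤ f s := fun s => norm_nonneg _
  have hfeq : ∀ s ∈ Set.Icc (0:ℝ) T, f s = ‖sol x l s‖ := by
    intro s hs
    rw [hf]
    simp only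
    rw [min_eq_left hs.2, max_eq_right hs.1]
  -- the basic integral inequality
  set ee : ℝ := ‖x‖ + c * T with hee
  have hkey : ∀ s ∈ Set.Icc (0:ℝ) T, f s ≤ ee + c * ∫ u in (0:ℝ)..s, f u := by
    intro s hs
    have hm := hmild x l hl s hs
    have hcontS : ContinuousOn (fun τ => S l (s - τ) (F τ (sol x l τ) l)) (Set.Icc 0 s) :=
      S_solF_cont hω hsgc hnorm hFc hsolc x hl le_rfl hs.1 le_rfl hs.2
    have hbound : ∀ u ∈ Set.Icc (0:ℝ) s, ‖S l (s - u) (F u (sol x l u) l)‖ ≤ c * (1 + f u) := by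
      intro u hu
      have huT : u ∈ Set.Icc (0:ℝ) T := ⟨hu.1, le_trans hu.2 hs.2⟩
      calc ‖S l (s - u) (F u (sol x l u) l)‖ ≤ ‖F u (sol x l u) l‖ :=
            S_norm_le hω hnorm hl (by linarith [hu.2]) _
      _ ≤ c * (1 + ‖sol x l u‖) := hFg u huT _ l hl
      _ = c * (1 + f u) := by rw [hfeq u huT]
    have hnormint : ‖∫ τ in (0:ℝ)..s, S l (s - τ) (F τ (sol x l τ) l)‖
        ≤ ∫ u in (0:ℝ)..s, c * (1 + f u) := by
      calc ‖∫ τ in (0:ℝ)..s, S l (s - τ) (F τ (sol x l τ) l)‖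
          ≤ ∫ τ in (0:ℝ)..s, ‖S l (s - τ) (F τ (sol x l τ) l)‖ :=
            norm_integral_le_integral_norm hs.1
      _ ≤ ∫ u in (0:ℝ)..s, c * (1 + f u) := by
          refine integral_mono_on hs.1 ?_ ?_ hbound
          · apply ContinuousOn.intervalIntegrable
            rw [Set.uIcc_of_le hs.1]
            exact hcontS.norm
          · apply Continuous.intervalIntegrable
            exact continuous_const.mul (continuous_const.add hfc)
    have hinteq : (∫ u in (0:ℝ)..s, c * (1 + f u)) = c * s + c * ∫ u in (0:ℝ)..s, f u := by
      have h1 : (∫ u in (0:ℝ)..s, c * (1 + f u)) = ∫ u in (0:ℝ)..s, (c + c * f u) := by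
        refine integral_congr fun u _ => ?_
        ring
      rw [h1, integral_add intervalIntegrable_const (by
        apply Continuous.intervalIntegrable; exact continuous_const.mul hfc)]
      rw [intervalIntegral.integral_const, intervalIntegral.integral_const_mul]
      simp only [smul_eq_mul, sub_zero, mul_comm]
    have hS1 : ‖S l s x‖ ≤ ‖x‖ := S_norm_le hω hnorm hl hs.1 x
    calc f s = ‖sol x l s‖ := hfeq s hs
    _ ≤ ‖S l s x‖ + ‖∫ τ in (0:ℝ)..s, S l (s - τ) (F τ (sol x l τ) l)‖ := by
        rw [hm]; exact norm_add_le _ _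
    _ ≤ ‖x‖ + (c * s + c * ∫ u in (0:ℝ)..s, f u) := by
        have := hnormint.trans (le_of_eq hinteq)
        linarith
    _ ≤ ee + c * ∫ u in (0:ℝ)..s, f u := by
        rw [hee]
        have : c * s ≤ c * T := by nlinarith [hs.2]
        linarith
  -- Gronwall via the primitive G
  set G : ℝ → ℝ := fun s => ∫ u in (0:ℝ)..s, f u with hG
  have hGderiv : ∀ s ∈ Set.Ico (0:ℝ) T, HasDerivWithinAt G (f s) (Set.Ici s) s := by
    intro s _
    exact (intervalIntegral.integral_hasDerivAt_right (hfc.intervalIntegrable 0 s)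
      (hfc.stronglyMeasurableAtFilter _ _) hfc.continuousAt).hasDerivWithinAt
  have hGcont : ContinuousOn G (Set.Icc 0 T) :=
    (intervalIntegral.continuous_primitive (fun p q => hfc.intervalIntegrable p q) 0).continuousOn
  have hGnonneg : ∀ s ∈ Set.Icc (0:ℝ) T, 0 ≤ G s := fun s hs =>
    integral_nonneg hs.1 fun u _ => hfnonneg u
  have hGbound : ∀ s ∈ Set.Ico (0:ℝ) T, ‖f s‖ ≤ c * ‖G s‖ + ee := by
    intro s hs
    rw [Real.norm_eq_abs, abs_of_nonneg (hfnonneg s), Real.norm_eq_abs,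
      abs_of_nonneg (hGnonneg s ⟨hs.1, hs.2.le⟩)]
    have := hkey s ⟨hs.1, hs.2.le⟩
    linarith
  have hG0 : ‖G 0‖ ≤ 0 := by
    rw [hG]
    simp [intervalIntegral.integral_same]
  have hgron := norm_le_gronwallBound_of_norm_deriv_right_le (δ := 0) (K := c) (ε := ee)
    hGcont hGderiv hG0 hGbound
  have hGle : G τ ≤ gronwallBound 0 c ee (τ - 0) := by
    have := hgron τ hτ
    rwa [Real.norm_eq_abs, abs_of_nonneg (hGnonneg τ hτ)] at this
  have hgb : gronwallBound 0 c ee (τ - 0) ≤ ee / c * (Real.exp (c * T) - 1) := by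
    rw [gronwallBound_of_K_ne_0 hc.ne']
    simp only [zero_mul, zero_add]
    have h1 : Real.exp (c * (τ - 0)) ≤ Real.exp (c * T) := by
      apply Real.exp_le_exp.mpr
      nlinarith [hτ.1, hτ.2]
    have h2 : 0 ≤ ee / c := by
      rw [hee]; positivity
    nlinarith
  have heen : 0 ≤ ee := by rw [hee]; positivity
  have hfin : f τ ≤ ee + c * (ee / c * (Real.exp (c * T) - 1)) := by
    have h3 := hkey τ hτ
    have h4 : c * G τ ≤ c * (ee / c * (Real.exp (c * T) - 1)) :=
      mul_le_mul_of_nonneg_left (hGle.trans hgb) hc.le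
    have : G τ = ∫ u in (0:ℝ)..τ, f u := rfl
    rw [← this] at h3
    linarith
  rw [← hfeq τ hτ]
  calc f τ ≤ ee + c * (ee / c * (Real.exp (c * T) - 1)) := hfin
  _ = ee * Real.exp (c * T) := by field_simp; ring
  _ = (‖x‖ + c * T) * Real.exp (c * T) := by rw [hee]

end Flow
section Step

open Bornology Set MeasureTheory intervalIntegral Pointwise

variable {E : Type*} [NormedAddCommGroup E] [NormedSpace ℝ E] [CompleteSpace E]
variable {S : ℝ → ℝ → E →L[ℝ] E} {ω : ℝ} {T : ℝ} {F : ℝ → E → ℝ → E} {sol : E → ℝ → ℝ → E}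

lemma step_ineq (hω : 0 < ω)
    (hsg1 : ∀ l ∈ Set.Icc (0:ℝ) 1, S l 0 = ContinuousLinearMap.id ℝ E)
    (hsg2 : ∀ l ∈ Set.Icc (0:ℝ) 1, ∀ s ≥ (0:ℝ), ∀ t ≥ (0:ℝ),
      S l (s + t) = (S l s).comp (S l t))
    (hsgc : ∀ l ∈ Set.Icc (0:ℝ) 1, ∀ x : E, ContinuousOn (fun t => S l t x) (Set.Ici 0))
    (hnorm : ∀ l ∈ Set.Icc (0:ℝ) 1, ∀ t ≥ (0:ℝ), ‖S l t‖ ≤ Real.exp (-ω * t))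
    (hresc : ∀ t ≥ (0:ℝ), ∀ x : E, ContinuousOn (fun l => S l t x) (Set.Icc 0 1))
    (hFc : Continuous fun p : ℝ × E × ℝ => F p.1 p.2.1 p.2.2)
    {c : ℝ} (hc : 0 < c)
    (hFg : ∀ t ∈ Set.Icc (0:ℝ) T, ∀ x : E, ∀ l ∈ Set.Icc (0:ℝ) 1,
      ‖F t x l‖ ≤ c * (1 + ‖x‖))
    {k : ℝ} (hk0 : 0 ≤ k)
    (hFk : ∀ Ω : Set E, IsBounded Ω →
      hmnc {y : E | ∃ t ∈ Set.Icc (0:ℝ) T, ∃ x ∈ Ω, ∃ l ∈ Set.Icc (0:ℝ) 1, y = F t x l}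
        ≤ k * hmnc Ω)
    (hsolc : ∀ x : E, ∀ l ∈ Set.Icc (0:ℝ) 1, ContinuousOn (sol x l) (Set.Icc 0 T))
    (hmild : ∀ x : E, ∀ l ∈ Set.Icc (0:ℝ) 1, ∀ t ∈ Set.Icc (0:ℝ) T,
      sol x l t = S l t x + ∫ τ in (0:ℝ)..t, S l (t - τ) (F τ (sol x l τ) l))
    {Ω : Set E} {R : ℝ} (hR : 0 ≤ R)
    (hΩR : ∀ x ∈ Ω, ∀ l ∈ Set.Icc (0:ℝ) 1, ∀ τ ∈ Set.Icc 0 T, ‖sol x l τ‖ ≤ R)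
    {σ h : ℝ} (h0 : 0 ≤ σ) (hh : 0 < h) (hσh : σ + h ≤ T) :
    hmnc {y : E | ∃ x ∈ Ω, ∃ l ∈ Set.Icc (0:ℝ) 1, y = sol x l (σ + h)}
      ≤ (Real.exp (-ω * h) + k * h) *
          hmnc {y : E | ∃ x ∈ Ω, ∃ l ∈ Set.Icc (0:ℝ) 1, y = sol x l σ}
        + k * (c * (1 + R)) * h ^ 2 := by
  have hσT : σ ∈ Set.Icc (0:ℝ) T := ⟨h0, by linarith⟩
  set M := c * (1 + R) with hM
  have hM0 : 0 < M := by rw [hM]; positivity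
  set Φσ := {y : E | ∃ x ∈ Ω, ∃ l ∈ Set.Icc (0:ℝ) 1, y = sol x l σ} with hΦσ
  have hΦσR : Φσ ⊆ Metric.closedBall 0 R := by
    rintro y ⟨x, hx, l, hl, rfl⟩
    rw [Metric.mem_closedBall, dist_eq_norm, sub_zero]
    exact hΩR x hx l hl σ hσT
  have hΦσb : IsBounded Φσ := (Metric.isBounded_closedBall).subset hΦσR
  set Aset := {y : E | ∃ l ∈ Set.Icc (0:ℝ) 1, ∃ v ∈ Φσ, y = S l h v} with hAset
  set Btube := {y : E | ∃ x ∈ Ω, ∃ l ∈ Set.Icc (0:ℝ) 1, ∃ τ ∈ Set.Icc σ (σ + h),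
    y = sol x l τ} with hBtube
  have hBtubeR : Btube ⊆ Metric.closedBall 0 R := by
    rintro y ⟨x, hx, l, hl, τ, hτ, rfl⟩
    rw [Metric.mem_closedBall, dist_eq_norm, sub_zero]
    exact hΩR x hx l hl τ ⟨le_trans h0 hτ.1, le_trans hτ.2 hσh⟩
  have hBtubeb : IsBounded Btube := (Metric.isBounded_closedBall).subset hBtubeR
  set FImg := {y : E | ∃ t ∈ Set.Icc (0:ℝ) T, ∃ x ∈ Btube, ∃ l ∈ Set.Icc (0:ℝ) 1,
    y = F t x l} with hFImg
  have hFImgM : FImg ⊆ Metric.closedBall 0 M := by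
    rintro y ⟨t, ht, v, hv, l, hl, rfl⟩
    rw [Metric.mem_closedBall, dist_eq_norm, sub_zero]
    have h1 := hFg t ht v l hl
    have h2 : ‖v‖ ≤ R := by
      have := hBtubeR hv
      rwa [Metric.mem_closedBall, dist_eq_norm, sub_zero] at this
    calc ‖F t v l‖ ≤ c * (1 + ‖v‖) := h1
    _ ≤ M := by rw [hM]; nlinarith
  have hFImgb : IsBounded FImg := (Metric.isBounded_closedBall).subset hFImgM
  set K := {y : E | ∃ l ∈ Set.Icc (0:ℝ) 1, ∃ s ∈ Set.Icc (0:ℝ) h, ∃ v ∈ FImg,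
    y = S l s v} with hK
  have hKM : K ⊆ Metric.closedBall 0 M := by
    rintro y ⟨l, hl, s, hs, v, hv, rfl⟩
    rw [Metric.mem_closedBall, dist_eq_norm, sub_zero]
    have h2 : ‖v‖ ≤ M := by
      have := hFImgM hv
      rwa [Metric.mem_closedBall, dist_eq_norm, sub_zero] at this
    exact le_trans (S_norm_le hω hnorm hl hs.1 v) h2
  have hKb : IsBounded K := (Metric.isBounded_closedBall).subset hKM
  set Bset := {y : E | ∃ w ∈ closure (convexHull ℝ K), y = h • w} with hBset
  have hBsetb : IsBounded Bset := by
    have hsub : Bset ⊆ Metric.closedBall 0 (h * M) := by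
      rintro y ⟨w, hw, rfl⟩
      have hwM : w ∈ Metric.closedBall (0:E) M := by
        have hcl : closure (convexHull ℝ K) ⊆ Metric.closedBall (0:E) M :=
          closure_minimal (convexHull_min hKM (convex_closedBall 0 M))
            Metric.isClosed_closedBall
        exact hcl hw
      rw [Metric.mem_closedBall, dist_eq_norm, sub_zero] at hwM ⊢
      rw [norm_smul, Real.norm_eq_abs, abs_of_pos hh]
      exact mul_le_mul_of_nonneg_left hwM hh.le
    exact (Metric.isBounded_closedBall).subset hsub
  have hAsetb : IsBounded Aset := by
    have hsub : Aset ⊆ Metric.closedBall 0 R := by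
      rintro y ⟨l, hl, v, hv, rfl⟩
      have h2 : ‖v‖ ≤ R := by
        have := hΦσR hv
        rwa [Metric.mem_closedBall, dist_eq_norm, sub_zero] at this
      rw [Metric.mem_closedBall, dist_eq_norm, sub_zero]
      exact le_trans (S_norm_le hω hnorm hl hh.le v) h2
    exact (Metric.isBounded_closedBall).subset hsub
  -- decomposition
  have hdecomp : ∀ y ∈ {y : E | ∃ x ∈ Ω, ∃ l ∈ Set.Icc (0:ℝ) 1, y = sol x l (σ + h)},
      ∃ a ∈ Aset, ∃ b ∈ Bset, y = a + b := by
    rintro y ⟨x, hx, l, hl, rfl⟩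
    have hflow := sol_flow hω hsg2 hsgc hnorm hFc hsolc hmild x hl h0
      (show σ ≤ σ + h by linarith) hσh
    have hts : σ + h - σ = h := by ring
    rw [hts] at hflow
    refine ⟨S l h (sol x l σ), ⟨l, hl, sol x l σ, ⟨x, hx, l, hl, rfl⟩, rfl⟩, ?_⟩
    have hcont : ContinuousOn (fun τ => S l (σ + h - τ) (F τ (sol x l τ) l))
        (Set.Icc σ (σ + h)) :=
      S_solF_cont hω hsgc hnorm hFc hsolc x hl h0 (by linarith) le_rfl hσh
    have hmem : ∀ τ ∈ Set.Ioc σ (σ + h),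
        S l (σ + h - τ) (F τ (sol x l τ) l) ∈ K := by
      intro τ hτ
      have hτT : τ ∈ Set.Icc (0:ℝ) T := ⟨le_trans h0 hτ.1.le, le_trans hτ.2 hσh⟩
      exact ⟨l, hl, σ + h - τ, ⟨by linarith [hτ.2], by linarith [hτ.1.le]⟩,
        F τ (sol x l τ) l,
        ⟨τ, hτT, sol x l τ, ⟨x, hx, l, hl, τ, ⟨hτ.1.le, hτ.2⟩, rfl⟩, l, hl, rfl⟩, rfl⟩
    obtain ⟨w, hw, hweq⟩ := integral_mem_smul_cch hh hcont hmem
    exact ⟨h • w, ⟨w, hw, rfl⟩, by rw [hflow, hweq]⟩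
  -- bounds
  have hAbound : hmnc Aset ≤ Real.exp (-ω * h) * hmnc Φσ := by
    refine hmnc_S_fixed hω hnorm hresc hΦσb hh.le ?_
    rintro y ⟨l, hl, v, hv, rfl⟩
    exact ⟨l, hl, v, hv, rfl⟩
  have hSBound : hmnc Btube ≤ hmnc Φσ + M * h := by
    set SBset := {y : E | ∃ l ∈ Set.Icc (0:ℝ) 1, ∃ s ∈ Set.Icc (0:ℝ) h, ∃ v ∈ Φσ,
      y = S l s v} with hSBset
    have hSBb : IsBounded SBset := by
      have hsub : SBset ⊆ Metric.closedBall 0 R := by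
        rintro y ⟨l, hl, s, hs, v, hv, rfl⟩
        have h2 : ‖v‖ ≤ R := by
          have := hΦσR hv
          rwa [Metric.mem_closedBall, dist_eq_norm, sub_zero] at this
        rw [Metric.mem_closedBall, dist_eq_norm, sub_zero]
        exact le_trans (S_norm_le hω hnorm hl hs.1 v) h2
      exact (Metric.isBounded_closedBall).subset hsub
    have h1 : hmnc SBset ≤ hmnc Φσ :=
      hmnc_S_set hω hsg1 hsg2 hsgc hnorm hresc hΦσb hh.le
        (fun y hy => hy)
    have h2 : hmnc Btube ≤ hmnc SBset + M * h := by
      refine hmnc_le_add_const hSBb (by positivity) ?_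
      rintro y ⟨x, hx, l, hl, τ, hτ, rfl⟩
      have hτ0 : 0 ≤ τ := le_trans h0 hτ.1
      have hτT : τ ≤ T := le_trans hτ.2 hσh
      have hflow := sol_flow hω hsg2 hsgc hnorm hFc hsolc hmild x hl h0 hτ.1 hτT
      refine ⟨S l (τ - σ) (sol x l σ), ⟨l, hl, τ - σ, ⟨by linarith [hτ.1],
        by linarith [hτ.2]⟩, sol x l σ, ⟨x, hx, l, hl, rfl⟩, rfl⟩, ?_⟩
      rw [hflow]
      simp only [add_sub_cancel_left]
      calc ‖∫ u in σ..τ, S l (τ - u) (F u (sol x l u) l)‖ ≤ M * |τ - σ| := by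
            refine intervalIntegral.norm_integral_le_of_norm_le_const fun u hu => ?_
            rw [Set.uIoc_of_le hτ.1] at hu
            have hu0 : 0 ≤ u := le_trans h0 hu.1.le
            have huT : u ∈ Set.Icc (0:ℝ) T := ⟨hu0, le_trans hu.2 hτT⟩
            calc ‖S l (τ - u) (F u (sol x l u) l)‖ ≤ ‖F u (sol x l u) l‖ :=
                  S_norm_le hω hnorm hl (by linarith [hu.2]) _
            _ ≤ c * (1 + ‖sol x l u‖) := hFg u huT _ l hl
            _ ≤ M := by
                rw [hM]
                have := hΩR x hx l hl u huT
                nlinarith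
      _ ≤ M * h := by
          rw [abs_of_nonneg (by linarith [hτ.1])]
          nlinarith [hτ.2]
    linarith
  have hFbound : hmnc FImg ≤ k * hmnc Btube := hFk Btube hBtubeb
  have hKbound : hmnc K ≤ hmnc FImg :=
    hmnc_S_set hω hsg1 hsg2 hsgc hnorm hresc hFImgb hh.le (fun y hy => hy)
  have hBbound : hmnc Bset ≤ h * hmnc K :=
    hmnc_smul_cch hKb hh (fun y hy => hy)
  have htotal := hmnc_le_add hAsetb hBsetb hdecomp
  have hchain : hmnc Bset ≤ h * (k * (hmnc Φσ + M * h)) := by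
    calc hmnc Bset ≤ h * hmnc K := hBbound
    _ ≤ h * (k * hmnc Btube) := by
        refine mul_le_mul_of_nonneg_left (le_trans hKbound hFbound) hh.le
    _ ≤ h * (k * (hmnc Φσ + M * h)) := by
        refine mul_le_mul_of_nonneg_left (mul_le_mul_of_nonneg_left hSBound hk0) hh.le
  calc hmnc {y : E | ∃ x ∈ Ω, ∃ l ∈ Set.Icc (0:ℝ) 1, y = sol x l (σ + h)}
      ≤ hmnc Aset + hmnc Bset := htotal
  _ ≤ Real.exp (-ω * h) * hmnc Φσ + h * (k * (hmnc Φσ + M * h)) :=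
      add_le_add hAbound hchain
  _ = (Real.exp (-ω * h) + k * h) * hmnc Φσ + k * M * h ^ 2 := by ring

end Step

open Topology in
theorem stmt11 {E : Type*} [NormedAddCommGroup E] [NormedSpace ℝ E] [CompleteSpace E]
    [TopologicalSpace.SeparableSpace E]
    (S : ℝ → ℝ → E →L[ℝ] E) (ω : ℝ) (hω : 0 < ω)
    (hsg1 : ∀ l ∈ Set.Icc (0:ℝ) 1, S l 0 = ContinuousLinearMap.id ℝ E)
    (hsg2 : ∀ l ∈ Set.Icc (0:ℝ) 1, ∀ s ≥ (0:ℝ), ∀ t ≥ (0:ℝ),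
      S l (s + t) = (S l s).comp (S l t))
    (hsgc : ∀ l ∈ Set.Icc (0:ℝ) 1, ∀ x : E, ContinuousOn (fun t => S l t x) (Set.Ici 0))
    (hnorm : ∀ l ∈ Set.Icc (0:ℝ) 1, ∀ t ≥ (0:ℝ), ‖S l t‖ ≤ Real.exp (-ω * t))
    (hresc : ∀ t ≥ (0:ℝ), ∀ x : E, ContinuousOn (fun l => S l t x) (Set.Icc 0 1))
    (T : ℝ) (hT : 0 < T)
    (F : ℝ → E → ℝ → E)
    (hFc : Continuous fun p : ℝ × E × ℝ => F p.1 p.2.1 p.2.2)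
    (hFl : ∀ x : E, ∃ δ > (0:ℝ), ∃ L > (0:ℝ), ∀ x₁ ∈ Metric.ball x δ,
      ∀ x₂ ∈ Metric.ball x δ, ∀ t ∈ Set.Icc (0:ℝ) T, ∀ l ∈ Set.Icc (0:ℝ) 1,
        ‖F t x₁ l - F t x₂ l‖ ≤ L * ‖x₁ - x₂‖)
    (c : ℝ) (hc : 0 < c)
    (hFg : ∀ t ∈ Set.Icc (0:ℝ) T, ∀ x : E, ∀ l ∈ Set.Icc (0:ℝ) 1,
      ‖F t x l‖ ≤ c * (1 + ‖x‖))
    (k : ℝ) (hk0 : 0 ≤ k) (hkω : k < ω)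
    (hFk : ∀ Ω : Set E, IsBounded Ω →
      hmnc {y : E | ∃ t ∈ Set.Icc (0:ℝ) T, ∃ x ∈ Ω, ∃ l ∈ Set.Icc (0:ℝ) 1, y = F t x l}
        ≤ k * hmnc Ω)
    (sol : E → ℝ → ℝ → E)
    (hsolc : ∀ x : E, ∀ l ∈ Set.Icc (0:ℝ) 1, ContinuousOn (sol x l) (Set.Icc 0 T))
    (hmild : ∀ x : E, ∀ l ∈ Set.Icc (0:ℝ) 1, ∀ t ∈ Set.Icc (0:ℝ) T,
      sol x l t = S l t x + ∫ τ in (0:ℝ)..t, S l (t - τ) (F τ (sol x l τ) l)) :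
    ∀ t ∈ Set.Icc (0:ℝ) T, ∀ Ω : Set E, IsBounded Ω →
      hmnc {y : E | ∃ x ∈ Ω, ∃ l ∈ Set.Icc (0:ℝ) 1, y = sol x l t} ≤
        Real.exp ((k - ω) * t) * hmnc Ω := by
  
  intro t ht Ω hΩ
  have hsol0 : ∀ x : E, ∀ l ∈ Set.Icc (0:ℝ) 1, sol x l 0 = x := by
    intro x l hl
    have := hmild x l hl 0 ⟨le_rfl, hT.le⟩
    rw [intervalIntegral.integral_same, add_zero, hsg1 l hl] at this
    simpa using this
  have hΦ0 : {y : E | ∃ x ∈ Ω, ∃ l ∈ Set.Icc (0:ℝ) 1, y = sol x l 0} = Ω := by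
    ext y
    constructor
    · rintro ⟨x, hx, l, hl, rfl⟩
      rwa [hsol0 x l hl]
    · intro hy
      exact ⟨y, hy, 0, ⟨le_rfl, zero_le_one⟩, (hsol0 y 0 ⟨le_rfl, zero_le_one⟩).symm⟩
  rcases eq_or_lt_of_le ht.1 with h0t | h0t
  · rw [← h0t, hΦ0]
    simp
  -- main case 0 < t
  obtain ⟨N, hN⟩ := hΩ.subset_closedBall 0
  set R := (|N| + c * T) * Real.exp (c * T) with hRdef
  have hR : 0 ≤ R := by rw [hRdef]; positivity
  have hΩR : ∀ x ∈ Ω, ∀ l ∈ Set.Icc (0:ℝ) 1, ∀ τ ∈ Set.Icc 0 T, ‖sol x l τ‖ ≤ R := by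
    intro x hx l hl τ hτ
    have h1 := sol_aprior hω hsgc hnorm hc hT hFg hFc hsolc hmild x hl hτ
    have h2 : ‖x‖ ≤ |N| := by
      have := hN hx
      rw [Metric.mem_closedBall, dist_eq_norm, sub_zero] at this
      exact this.trans (le_abs_self N)
    have h3 : (‖x‖ + c * T) * Real.exp (c * T) ≤ R := by
      rw [hRdef]
      apply mul_le_mul_of_nonneg_right (by linarith) (Real.exp_pos _).le
    linarith
  set β := hmnc Ω with hβdef
  have hβ : 0 ≤ β := hmnc_nonneg Ω
  -- key bound for each n ≥ 1
  have key : ∀ n : ℕ, 1 ≤ n →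
      hmnc {y : E | ∃ x ∈ Ω, ∃ l ∈ Set.Icc (0:ℝ) 1, y = sol x l t}
        ≤ Real.exp (-ω * t + k * t * Real.exp (ω * (t / n))) * β
          + k * (c * (1 + R)) * t ^ 2 / n * Real.exp (k * t * Real.exp (ω * t)) := by
    intro n hn
    have hn0 : 0 < (n:ℝ) := by exact_mod_cast Nat.pos_of_ne_zero (by omega)
    set h := t / n with hhdef
    have hhpos : 0 < h := div_pos h0t hn0
    have hnh : (n:ℝ) * h = t := by rw [hhdef]; field_simp
    have hht : h ≤ t := by
      rw [hhdef]
      calc t / n ≤ t / 1 := by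
            apply div_le_div_of_nonneg_left h0t.le one_pos
            exact_mod_cast hn
      _ = t := div_one t
    set q := Real.exp (-ω * h) + k * h with hqdef
    have hq0 : 0 < q := by
      have := Real.exp_pos (-ω * h)
      nlinarith
    set m := max 1 q with hmdef
    have hm1 : (1:ℝ) ≤ m := le_max_left _ _
    have hqm : q ≤ m := le_max_right _ _
    set P := k * (c * (1 + R)) * h ^ 2 with hPdef
    have hP0 : 0 ≤ P := by rw [hPdef]; positivity
    have ind : ∀ i : ℕ, i ≤ n →
        hmnc {y : E | ∃ x ∈ Ω, ∃ l ∈ Set.Icc (0:ℝ) 1, y = sol x l ((i:ℝ) * h)}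
          ≤ q ^ i * β + (i:ℝ) * P * m ^ i := by
      intro i
      induction i with
      | zero =>
        intro _
        simp only [Nat.cast_zero, zero_mul, pow_zero, one_mul, zero_add]
        rw [hΦ0]
        simp [hβdef]
      | succ i ih =>
        intro hin
        have hi : i ≤ n := le_trans (Nat.le_succ i) hin
        have hIH := ih hi
        have hσ0 : 0 ≤ (i:ℝ) * h := by positivity
        have hσh : (i:ℝ) * h + h ≤ T := by
          have h1 : ((i:ℝ) + 1) * h ≤ (n:ℝ) * h := by
            apply mul_le_mul_of_nonneg_right _ hhpos.le
            have : ((i:ℕ) + 1 : ℕ) ≤ n := hin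
            exact_mod_cast this
          rw [hnh] at h1
          have := ht.2
          nlinarith
        have hstep := step_ineq hω hsg1 hsg2 hsgc hnorm hresc hFc hc hFg hk0 hFk
          hsolc hmild hR hΩR hσ0 hhpos hσh
        have hcast : ((i + 1 : ℕ):ℝ) * h = (i:ℝ) * h + h := by push_cast; ring
        rw [hcast]
        refine le_trans hstep ?_
        have hnn : 0 ≤ hmnc {y : E | ∃ x ∈ Ω, ∃ l ∈ Set.Icc (0:ℝ) 1, y = sol x l ((i:ℝ) * h)} :=
          hmnc_nonneg _
        have hmono : (Real.exp (-ω * h) + k * h) *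
            hmnc {y : E | ∃ x ∈ Ω, ∃ l ∈ Set.Icc (0:ℝ) 1, y = sol x l ((i:ℝ) * h)}
            ≤ q * (q ^ i * β + (i:ℝ) * P * m ^ i) := by
          rw [← hqdef]
          exact mul_le_mul_of_nonneg_left hIH hq0.le
        have hPh : k * (c * (1 + R)) * h ^ 2 = P := hPdef.symm
        have hmpow : (1:ℝ) ≤ m ^ (i + 1) := one_le_pow₀ hm1
        have hmpow' : (0:ℝ) ≤ m ^ i := le_trans zero_le_one (one_le_pow₀ hm1)
        have hkey2 : q * (q ^ i * β + (i:ℝ) * P * m ^ i) + P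
            ≤ q ^ (i + 1) * β + ((i:ℕ) + 1 : ℝ) * P * m ^ (i + 1) := by
          have e1 : q * (q ^ i * β) = q ^ (i + 1) * β := by rw [pow_succ]; ring
          have e2 : q * ((i:ℝ) * P * m ^ i) ≤ (i:ℝ) * P * m ^ (i + 1) := by
            rw [pow_succ]
            have : q * ((i:ℝ) * P * m ^ i) = (i:ℝ) * P * (m ^ i * q) := by ring
            rw [this]
            apply mul_le_mul_of_nonneg_left _ (by positivity)
            exact mul_le_mul_of_nonneg_left hqm hmpow'
          have e3 : P ≤ P * m ^ (i + 1) := le_mul_of_one_le_right hP0 hmpow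
          calc q * (q ^ i * β + (i:ℝ) * P * m ^ i) + P
              = q * (q ^ i * β) + q * ((i:ℝ) * P * m ^ i) + P := by ring
          _ ≤ q ^ (i + 1) * β + (i:ℝ) * P * m ^ (i + 1) + P * m ^ (i + 1) := by
              rw [e1]; linarith
          _ = q ^ (i + 1) * β + ((i:ℝ) + 1) * P * m ^ (i + 1) := by ring
          _ = q ^ (i + 1) * β + ((i:ℕ) + 1 : ℝ) * P * m ^ (i + 1) := by norm_num
        calc (Real.exp (-ω * h) + k * h) *
            hmnc {y : E | ∃ x ∈ Ω, ∃ l ∈ Set.Icc (0:ℝ) 1, y = sol x l ((i:ℝ) * h)}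
            + k * (c * (1 + R)) * h ^ 2
            ≤ q * (q ^ i * β + (i:ℝ) * P * m ^ i) + P := by rw [hPh]; linarith
        _ ≤ q ^ (i + 1) * β + ((i:ℕ) + 1 : ℝ) * P * m ^ (i + 1) := hkey2
        _ = q ^ (i + 1) * β + (((i:ℕ) + 1 : ℕ) : ℝ) * P * m ^ (i + 1) := by push_cast; ring
    have hfin := ind n le_rfl
    rw [hnh] at hfin
    -- analytic bounds on q^n and m^n
    have hqb : q ≤ Real.exp (-ω * h + k * h * Real.exp (ω * h)) := by
      have h1 : k * h * Real.exp (ω * h) + 1 ≤ Real.exp (k * h * Real.exp (ω * h)) :=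
        Real.add_one_le_exp _
      have h2 : q ≤ Real.exp (-ω * h) * (1 + k * h * Real.exp (ω * h)) := by
        rw [hqdef, mul_add, mul_one]
        have h3 : Real.exp (-ω * h) * (k * h * Real.exp (ω * h))
            = k * h * (Real.exp (-ω * h) * Real.exp (ω * h)) := by ring
        rw [h3, ← Real.exp_add]
        norm_num
      calc q ≤ Real.exp (-ω * h) * (1 + k * h * Real.exp (ω * h)) := h2
      _ ≤ Real.exp (-ω * h) * Real.exp (k * h * Real.exp (ω * h)) := by
          apply mul_le_mul_of_nonneg_left _ (Real.exp_pos _).le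
          linarith
      _ = Real.exp (-ω * h + k * h * Real.exp (ω * h)) := (Real.exp_add _ _).symm
    have hqn : q ^ n ≤ Real.exp (-ω * t + k * t * Real.exp (ω * h)) := by
      calc q ^ n ≤ (Real.exp (-ω * h + k * h * Real.exp (ω * h))) ^ n :=
            pow_le_pow_left₀ hq0.le hqb n
      _ = Real.exp ((n:ℝ) * (-ω * h + k * h * Real.exp (ω * h))) := by
          rw [← Real.exp_nat_mul]
      _ = Real.exp (-ω * t + k * t * Real.exp (ω * h)) := by
          congr 1
          have : (n:ℝ) * (-ω * h + k * h * Real.exp (ω * h))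
              = -ω * ((n:ℝ) * h) + k * ((n:ℝ) * h) * Real.exp (ω * h) := by ring
          rw [this, hnh]
    have hmb : m ≤ Real.exp (k * h * Real.exp (ω * h)) := by
      apply max_le
      · apply Real.one_le_exp
        positivity
      · calc q ≤ Real.exp (-ω * h + k * h * Real.exp (ω * h)) := hqb
        _ ≤ Real.exp (k * h * Real.exp (ω * h)) := by
            apply Real.exp_le_exp.mpr
            nlinarith [hhpos.le]
    have hmn : m ^ n ≤ Real.exp (k * t * Real.exp (ω * t)) := by
      calc m ^ n ≤ (Real.exp (k * h * Real.exp (ω * h))) ^ n :=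
            pow_le_pow_left₀ (le_trans zero_le_one hm1) hmb n
      _ = Real.exp ((n:ℝ) * (k * h * Real.exp (ω * h))) := by rw [← Real.exp_nat_mul]
      _ ≤ Real.exp (k * t * Real.exp (ω * t)) := by
          apply Real.exp_le_exp.mpr
          have h1 : (n:ℝ) * (k * h * Real.exp (ω * h)) = k * t * Real.exp (ω * h) := by
            rw [show (n:ℝ) * (k * h * Real.exp (ω * h))
              = k * ((n:ℝ) * h) * Real.exp (ω * h) by ring, hnh]
          rw [h1]
          have h2 : Real.exp (ω * h) ≤ Real.exp (ω * t) :=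
            Real.exp_le_exp.mpr (mul_le_mul_of_nonneg_left hht hω.le)
          have h3 : 0 ≤ k * t := mul_nonneg hk0 h0t.le
          exact mul_le_mul_of_nonneg_left h2 h3
    have hnP : (n:ℝ) * P = k * (c * (1 + R)) * t ^ 2 / n := by
      rw [hPdef, hhdef, div_pow]
      field_simp
    calc hmnc {y : E | ∃ x ∈ Ω, ∃ l ∈ Set.Icc (0:ℝ) 1, y = sol x l t}
        ≤ q ^ n * β + (n:ℝ) * P * m ^ n := hfin
    _ ≤ Real.exp (-ω * t + k * t * Real.exp (ω * h)) * β
        + (n:ℝ) * P * Real.exp (k * t * Real.exp (ω * t)) := by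
        have h1 : q ^ n * β ≤ Real.exp (-ω * t + k * t * Real.exp (ω * h)) * β :=
          mul_le_mul_of_nonneg_right hqn hβ
        have h2 : (n:ℝ) * P * m ^ n ≤ (n:ℝ) * P * Real.exp (k * t * Real.exp (ω * t)) :=
          mul_le_mul_of_nonneg_left hmn (by positivity)
        linarith
    _ = Real.exp (-ω * t + k * t * Real.exp (ω * (t / n))) * β
        + k * (c * (1 + R)) * t ^ 2 / n * Real.exp (k * t * Real.exp (ω * t)) := by
        rw [hnP, hhdef]
  -- pass to the limit n → ∞
  have hlim : Filter.Tendsto (fun n : ℕ =>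
      Real.exp (-ω * t + k * t * Real.exp (ω * (t / n))) * β
        + k * (c * (1 + R)) * t ^ 2 / n * Real.exp (k * t * Real.exp (ω * t)))
      Filter.atTop (𝓝 (Real.exp ((k - ω) * t) * β + 0)) := by
    apply Filter.Tendsto.add
    · have h1 : Filter.Tendsto (fun n : ℕ => ω * (t / n)) Filter.atTop (𝓝 0) := by
        have := tendsto_const_div_atTop_nhds_zero_nat (ω * t)
        refine this.congr fun n => ?_
        ring
      have h2 : Filter.Tendsto (fun n : ℕ => -ω * t + k * t * Real.exp (ω * (t / n)))
          Filter.atTop (𝓝 (-ω * t + k * t * 1)) := by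
        apply Filter.Tendsto.const_add
        apply Filter.Tendsto.const_mul
        have := (Real.continuous_exp.tendsto 0).comp h1
        simpa [Function.comp_def] using this
      have h3 := (Real.continuous_exp.tendsto _).comp h2
      have h4 : Real.exp (-ω * t + k * t * 1) = Real.exp ((k - ω) * t) := by
        congr 1; ring
      rw [h4] at h3
      exact h3.mul_const β
    · have h1 := tendsto_const_div_atTop_nhds_zero_nat (k * (c * (1 + R)) * t ^ 2)
      have h2 := h1.mul_const (Real.exp (k * t * Real.exp (ω * t)))
      simpa using h2
  rw [add_zero] at hlim
  exact ge_of_tendsto hlim (Filter.eventually_atTop.mpr ⟨1, key⟩)
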